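/- Define the SIAC kernel K : ℝ → ℝ by K := (−B(· | −2, −1, 0) + 14 · B(· | −1, 0, 1) − B(· | 0, 1, 2))/12, where B(· | s_0, s_1, s_2) denotes the degree-1 B-spline with knots s_0 < s_1 < s_2. Then K reproduces polynomials of degree up to 2 under convolution: for every δ ∈ {0, 1, 2} and every x ∈ ℝ, ∫_ℝ K(t) (x − t)^δ dt = x^δ. -/

import Mathlib

/-! On integer knots the degree-1 B-spline is the hat function `hat y = max (1 - |y|) 0`
centred at the middle knot, so `K = (14 hat - hat (· + 1) - hat (· - 1)) / 12`. The hat is even,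
with mass `1` and second moment `1/6`, hence `∫ hat v (y - v)^δ dv = y^δ + (δ choose 2)/6` for
`δ ≤ 2`. Translating, `∫ K(u) (x - u)^δ du = (14 x^δ - (x + 1)^δ - (x - 1)^δ + 2 (δ choose 2)) / 12`,
and the central second difference `(x + 1)^δ + (x - 1)^δ = 2 x^δ + 2 (δ choose 2)` cancels the
moment correction. -/

open MeasureTheory

/-- Divided difference `Δ[t_i, ..., t_j] h`, defined recursively:
`Δ[t_i] h = h (t i)` and
`Δ[t_{i:j}] h = (Δ[t_{i+1:j}] h - Δ[t_{i:j-1}] h) / (t j - t i)` for `i < j`. -/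
noncomputable def dd (t : ℤ → ℝ) (h : ℝ → ℝ) (i j : ℤ) : ℝ :=
  if _hij : i < j then
    (dd t h (i + 1) j - dd t h i (j - 1)) / (t j - t i)
  else h (t i)
termination_by (j - i).toNat
decreasing_by
  · omega
  · omega

/-- B-spline of degree `j - i - 1` with knots `t i, ..., t j`:
`B(x | t_{i:j}) = (t_j - t_i) · Δ[t_{i:j}] (max (· - x) 0)^(j-i-1)`. -/
noncomputable def bspline (t : ℤ → ℝ) (i j : ℤ) (x : ℝ) : ℝ :=
  (t j - t i) * dd t (fun u => (max (u - x) 0) ^ (j - i - 1).toNat) i j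

lemma dd_self (t : ℤ → ℝ) (h : ℝ → ℝ) (i : ℤ) : dd t h i i = h (t i) := by
  rw [dd, dif_neg (lt_irrefl i)]

lemma dd_of_lt (t : ℤ → ℝ) (h : ℝ → ℝ) {i j : ℤ} (hij : i < j) :
    dd t h i j = (dd t h (i + 1) j - dd t h i (j - 1)) / (t j - t i) := by
  rw [dd, dif_pos hij]

lemma dd_add_one (t : ℤ → ℝ) (h : ℝ → ℝ) (i : ℤ) :
    dd t h i (i + 1) = (h (t (i + 1)) - h (t i)) / (t (i + 1) - t i) := by
  rw [dd_of_lt t h (lt_add_one i), add_sub_cancel_right, dd_self, dd_self]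

lemma dd_add_two (t : ℤ → ℝ) (h : ℝ → ℝ) (i : ℤ) :
    dd t h i (i + 2) =
      ((h (t (i + 2)) - h (t (i + 1))) / (t (i + 2) - t (i + 1))
        - (h (t (i + 1)) - h (t i)) / (t (i + 1) - t i)) / (t (i + 2) - t i) := by
  have hsucc := dd_add_one t h (i + 1)
  rw [show i + 1 + 1 = i + 2 by ring] at hsucc
  rw [dd_of_lt t h (by omega : i < i + 2), show i + 2 - 1 = i + 1 by ring, hsucc, dd_add_one]

lemma bspline_add_two (t : ℤ → ℝ) (i : ℤ) (x : ℝ) (hne : t i ≠ t (i + 2)) :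
    bspline t i (i + 2) x =
      (max (t (i + 2) - x) 0 - max (t (i + 1) - x) 0) / (t (i + 2) - t (i + 1))
        - (max (t (i + 1) - x) 0 - max (t i - x) 0) / (t (i + 1) - t i) := by
  rw [bspline, show (i + 2 - i - 1).toNat = 1 by omega, dd_add_two,
    mul_div_cancel₀ _ (sub_ne_zero.mpr hne.symm)]
  simp only [pow_one]

def hat (y : ℝ) : ℝ := max (1 - |y|) 0

lemma hat_eq_max_sub_add (y : ℝ) :
    hat y = max (1 - y) 0 - 2 * max (-y) 0 + max (-1 - y) 0 := by
  simp only [hat, abs_eq_max_neg, max_def]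
  split_ifs <;> linarith

lemma bspline_intCast_eq_hat (i j : ℤ) (hj : j = i + 2) (x : ℝ) :
    bspline (fun k : ℤ => (k : ℝ)) i j x = hat (x - (i + 1)) := by
  subst hj
  rw [bspline_add_two _ _ _ (by push_cast; linarith), hat_eq_max_sub_add]
  push_cast
  ring_nf

lemma hat_neg (y : ℝ) : hat (-y) = hat y := by
  rw [hat, abs_neg, hat]

lemma hat_eq_zero_of_one_le_abs {y : ℝ} (hy : 1 ≤ |y|) : hat y = 0 :=
  max_eq_right (by linarith)

lemma hat_of_mem_Icc {y : ℝ} (hy : y ∈ Set.Icc (0 : ℝ) 1) : hat y = 1 - y := by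
  rw [hat, abs_of_nonneg hy.1, max_eq_left (by linarith [hy.2])]

lemma continuous_hat : Continuous hat := by
  unfold hat; fun_prop

lemma one_le_abs_of_notMem_Ioc {y : ℝ} (hy : y ∉ Set.Ioc (-1 : ℝ) 1) : 1 ≤ |y| := by
  rw [Set.mem_Ioc, not_and_or, not_lt, not_le] at hy
  rcases hy with hy | hy
  · rw [abs_of_neg (by linarith)]; linarith
  · rw [abs_of_pos (by linarith)]; linarith

lemma hasCompactSupport_hat : HasCompactSupport hat :=
  HasCompactSupport.intro (isCompact_Icc (a := -1) (b := 1)) fun _ hy =>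
    hat_eq_zero_of_one_le_abs (one_le_abs_of_notMem_Ioc fun h => hy (Set.Ioc_subset_Icc_self h))

lemma integrable_hat_sub_mul (c : ℝ) {f : ℝ → ℝ} (hf : Continuous f) :
    Integrable (fun u => hat (u - c) * f u) :=
  ((continuous_hat.comp (continuous_sub_right c)).mul hf).integrable_of_hasCompactSupport
    (hasCompactSupport_hat.comp_homeomorph (Homeomorph.subRight c)).mul_right

lemma integral_hat_mul {f : ℝ → ℝ} (hf : Continuous f) :
    ∫ v, hat v * f v = ∫ v in (0 : ℝ)..1, (1 - v) * (f v + f (-v)) := by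
  have hint : ∀ {g : ℝ → ℝ}, Continuous g → ∀ a b : ℝ,
      IntervalIntegrable (fun v => hat v * g v) volume a b :=
    fun hg a b => (continuous_hat.mul hg).intervalIntegrable a b
  have hsupp : ∫ v, hat v * f v = ∫ v in (-1 : ℝ)..1, hat v * f v := by
    rw [intervalIntegral.integral_of_le (by norm_num),
      setIntegral_eq_integral_of_forall_compl_eq_zero]
    intro v hv
    rw [hat_eq_zero_of_one_le_abs (one_le_abs_of_notMem_Ioc hv), zero_mul]
  have hneg : ∫ v in (-1 : ℝ)..0, hat v * f v = ∫ v in (0 : ℝ)..1, hat v * f (-v) := by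
    have := intervalIntegral.integral_comp_neg (a := 0) (b := 1) fun v => hat v * f v
    simp only [neg_zero, hat_neg] at this
    exact this.symm
  rw [hsupp, ← intervalIntegral.integral_add_adjacent_intervals (b := 0) (hint hf _ _)
    (hint hf _ _), hneg, ← intervalIntegral.integral_add (hint (by fun_prop) _ _) (hint hf _ _)]
  refine intervalIntegral.integral_congr fun v hv => ?_
  rw [Set.uIcc_of_le zero_le_one] at hv
  simp only [hat_of_mem_Icc hv]
  ring

lemma integral_one_sub_mul_add_mul_sq (a b : ℝ) :
    ∫ v in (0 : ℝ)..1, (1 - v) * (a + b * v ^ 2) = a / 2 + b / 12 := by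
  rw [intervalIntegral.integral_deriv_eq_sub'
    (fun v => a * v - a * v ^ 2 / 2 + b * v ^ 3 / 3 - b * v ^ 4 / 4)]
  · ring
  · ext v
    simp (disch := fun_prop) [deriv_div_const]
    ring
  · intro v _; fun_prop
  · fun_prop

lemma sub_pow_add_add_pow {δ : ℕ} (hδ : δ ≤ 2) (y v : ℝ) :
    (y - v) ^ δ + (y + v) ^ δ = 2 * y ^ δ + 2 * δ.choose 2 * v ^ 2 := by
  interval_cases δ <;> norm_num <;> ring

lemma integral_hat_mul_sub_pow {δ : ℕ} (hδ : δ ≤ 2) (y : ℝ) :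
    ∫ v, hat v * (y - v) ^ δ = y ^ δ + δ.choose 2 / 6 := by
  rw [integral_hat_mul (by fun_prop)]
  simp only [sub_neg_eq_add, sub_pow_add_add_pow hδ]
  rw [integral_one_sub_mul_add_mul_sq]
  ring

lemma integral_hat_sub_mul_sub_pow {δ : ℕ} (hδ : δ ≤ 2) (c y : ℝ) :
    ∫ u, hat (u - c) * (y - u) ^ δ = (y - c) ^ δ + δ.choose 2 / 6 := by
  rw [← integral_hat_mul_sub_pow hδ,
    ← integral_sub_right_eq_self (fun v => hat v * (y - c - v) ^ δ) c]
  simp only [sub_sub_sub_cancel_right]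

/-- The SIAC kernel
`K := (-B(· | -2,-1,0) + 14 · B(· | -1,0,1) - B(· | 0,1,2)) / 12`
built from degree-1 B-splines reproduces polynomials of degree up to 2 under
convolution: `∫ K(t) (x - t)^δ dt = x^δ` for every `δ ∈ {0, 1, 2}` and every `x ∈ ℝ`. -/
theorem stmt13
    (K : ℝ → ℝ)
    (hK : ∀ u : ℝ, K u = (-(bspline (fun m : ℤ => (m : ℝ)) (-2) 0 u)
        + 14 * bspline (fun m : ℤ => (m : ℝ)) (-1) 1 u
        - bspline (fun m : ℤ => (m : ℝ)) 0 2 u) / 12)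
    (δ : ℕ) (hδ : δ ≤ 2) (x : ℝ) :
    ∫ u : ℝ, K u * (x - u) ^ δ = x ^ δ := by
  have hK' : ∀ u, K u * (x - u) ^ δ = (14 * (hat (u - 0) * (x - u) ^ δ)
      - hat (u - -1) * (x - u) ^ δ - hat (u - 1) * (x - u) ^ δ) / 12 := by
    intro u
    rw [hK, bspline_intCast_eq_hat (-2) 0 (by norm_num), bspline_intCast_eq_hat (-1) 1 (by norm_num),
      bspline_intCast_eq_hat 0 2 (by norm_num)]
    push_cast
    ring_nf
  have hint (c : ℝ) := integrable_hat_sub_mul c (f := fun u => (x - u) ^ δ) (by fun_prop)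
  simp only [hK']
  rw [integral_div, integral_sub ?_ (hint 1), integral_sub ((hint 0).const_mul 14) (hint (-1)),
    integral_const_mul]
  · simp only [integral_hat_sub_mul_sub_pow hδ]
    linear_combination (-1 / 12 : ℝ) * sub_pow_add_add_pow hδ x 1
  · exact ((hint 0).const_mul 14).sub (hint (-1))
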